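/- arXiv:2505.02262 — 5 statements merged into one kernel-verified Lean document; each statement's English description precedes it below -/
import Mathlib

section
/- Let a, b, c, d be real numbers with a > 0. Then every complex root z of the cubic polynomial a·X³ + b·X² + c·X + d has negative real part (Re z < 0) if and only if b > 0, d > 0, and b·c > a·d. -/
lemma quad_aux (a e f : ℝ) (ha : 0 < a)
    (h : ∀ z : ℂ, (a : ℂ) * z ^ 2 + (e : ℂ) * z + (f : ℂ) = 0 → z.re < 0) :
    0 < e ∧ 0 < f := by
  have h2a : (0:ℝ) < 2*a := by linarith
  rcases le_or_gt 0 (e^2 - 4*a*f) with hdisc | hdisc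
  · set s := Real.sqrt (e^2 - 4*a*f) with hs
    have hs2 : s^2 = e^2 - 4*a*f := Real.sq_sqrt hdisc
    have hs0 : 0 ≤ s := Real.sqrt_nonneg _
    have hroot : ((((-e + s)/(2*a) : ℝ)) : ℂ).re < 0 := by
      apply h
      have : (a : ℂ) * (((-e + s)/(2*a) : ℝ) : ℂ)^2 + e * (((-e + s)/(2*a) : ℝ) : ℂ) + f
          = (((a * ((-e+s)/(2*a))^2 + e * ((-e+s)/(2*a)) + f : ℝ)) : ℂ) := by push_cast; ring
      rw [this]
      norm_cast
      field_simp
      nlinarith [hs2]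
    simp only [Complex.ofReal_re] at hroot
    have hnum : -e + s < 0 := by
      by_contra hcon
      exact absurd (div_nonneg (by linarith) h2a.le) (not_le.mpr hroot)
    have he : 0 < e := by linarith
    refine ⟨he, by nlinarith⟩
  · set t := Real.sqrt (4*a*f - e^2) with ht
    have ht2 : t^2 = 4*a*f - e^2 := Real.sq_sqrt (by linarith)
    have hroot := h ⟨-e/(2*a), t/(2*a)⟩ ?_
    · simp only at hroot
      have hnum : -e < 0 := by
        by_contra hcon
        exact absurd (div_nonneg (by linarith) h2a.le) (not_le.mpr hroot)
      exact ⟨by linarith, by nlinarith⟩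
    · rw [Complex.ext_iff]
      constructor <;>
      · simp [Complex.mul_re, Complex.mul_im, pow_succ, Complex.ofReal_re, Complex.ofReal_im]
        field_simp
        nlinarith [ht2]

lemma cubic_real_root (a b c d : ℝ) (ha : 0 < a) :
    ∃ r : ℝ, a*r^3 + b*r^2 + c*r + d = 0 := by
  set M : ℝ := (a + |b| + |c| + |d|)/a with hM
  have hM1 : 1 ≤ M := by
    rw [hM, le_div_iff₀ ha]
    nlinarith [abs_nonneg b, abs_nonneg c, abs_nonneg d]
  have haM : a * M = a + |b| + |c| + |d| := by
    rw [hM]; field_simp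
  have hcont : ContinuousOn (fun x : ℝ => a*x^3 + b*x^2 + c*x + d) (Set.Icc (-M) M) := by
    fun_prop
  have hle : -M ≤ M := by linarith
  have key := intermediate_value_Icc hle hcont
  have hfneg : a*(-M)^3 + b*(-M)^2 + c*(-M) + d ≤ 0 := by
    nlinarith [le_abs_self b, neg_abs_le b, le_abs_self c, neg_abs_le c,
      le_abs_self d, neg_abs_le d, abs_nonneg b, abs_nonneg c, abs_nonneg d,
      sq_nonneg M, mul_pos ha (by linarith : (0:ℝ) < M)]
  have hfpos : 0 ≤ a*M^3 + b*M^2 + c*M + d := by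
    nlinarith [le_abs_self b, neg_abs_le b, le_abs_self c, neg_abs_le c,
      le_abs_self d, neg_abs_le d, abs_nonneg b, abs_nonneg c, abs_nonneg d,
      sq_nonneg M, mul_pos ha (by linarith : (0:ℝ) < M)]
  obtain ⟨r, _, hr⟩ := key ⟨hfneg, hfpos⟩
  exact ⟨r, hr⟩

/-- Routh–Hurwitz criterion for a real cubic polynomial `a·X³ + b·X² + c·X + d` with `a > 0`:
all complex roots have negative real part iff `b > 0`, `d > 0` and `b·c > a·d`. -/
theorem routh_hurwitz_cubic (a b c d : ℝ) (ha : 0 < a) :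
    (∀ z : ℂ, (a : ℂ) * z ^ 3 + (b : ℂ) * z ^ 2 + (c : ℂ) * z + (d : ℂ) = 0 → z.re < 0) ↔
      (0 < b ∧ 0 < d ∧ a * d < b * c) := by
  constructor
  · intro h
    obtain ⟨r, hr⟩ := cubic_real_root a b c d ha
    have hrC : (a : ℂ) * (r:ℂ) ^ 3 + (b : ℂ) * (r:ℂ) ^ 2 + (c : ℂ) * (r:ℂ) + (d : ℂ) = 0 := by
      have : ((a*r^3 + b*r^2 + c*r + d : ℝ) : ℂ) = 0 := by exact_mod_cast hr
      push_cast at this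
      linear_combination this
    have hrneg : r < 0 := by simpa using h r hrC
    have hquad : ∀ z : ℂ, (a : ℂ) * z ^ 2 + ((b + a*r : ℝ) : ℂ) * z + ((c + b*r + a*r^2 : ℝ) : ℂ) = 0 → z.re < 0 := by
      intro z hz
      apply h z
      push_cast at hz
      linear_combination (z - (r:ℂ)) * hz + hrC
    obtain ⟨hE, hF⟩ := quad_aux a (b + a*r) (c + b*r + a*r^2) ha hquad
    refine ⟨by nlinarith, by nlinarith [mul_pos (neg_pos.mpr hrneg) hF], ?_⟩
    nlinarith [mul_pos hE hF, mul_pos (mul_pos hE hE) (neg_pos.mpr hrneg),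
      mul_nonneg (mul_pos ha hE).le (sq_nonneg r)]
  · rintro ⟨hb, hd, hbc⟩ z hz
    have hc : 0 < c := by nlinarith [mul_pos ha hd]
    rw [Complex.ext_iff] at hz
    obtain ⟨h1, h2⟩ := hz
    simp [Complex.add_re, Complex.add_im, Complex.mul_re, Complex.mul_im, pow_succ] at h1 h2
    set x := z.re with hx'
    set y := z.im with hy'
    have hre : a*(x^3 - 3*x*y^2) + b*(x^2 - y^2) + c*x + d = 0 := by nlinarith [h1]
    have him : y * (a*(3*x^2 - y^2) + 2*b*x + c) = 0 := by nlinarith [h2]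
    by_contra hx
    push_neg at hx
    rcases eq_or_ne y 0 with hy | hy
    · rw [hy] at hre
      nlinarith [mul_nonneg (mul_nonneg hx hx) hx, mul_nonneg hx hx]
    · have him2 : a*(3*x^2 - y^2) + 2*b*x + c = 0 :=
        (mul_eq_zero.mp him).resolve_left hy
      have key : 8*a^2*x^3 + 8*a*b*x^2 + 2*a*c*x + 2*b^2*x + (b*c - a*d) = 0 := by
        linear_combination (-a)*hre + (3*a*x + b)*him2
      have hx3 : 0 ≤ x^3 := pow_nonneg hx 3
      have t1 : 0 ≤ a^2*x^3 := mul_nonneg (by positivity) hx3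
      have t2 : 0 ≤ a*b*x^2 := mul_nonneg (mul_pos ha hb).le (sq_nonneg x)
      have t3 : 0 ≤ a*c*x := mul_nonneg (mul_pos ha hc).le hx
      have t4 : 0 ≤ b^2*x := mul_nonneg (sq_nonneg b) hx
      linarith [key, t1, t2, t3, t4]
end

section
/- Let K, ωc, R, Ki2, and ã be strictly positive real numbers. Then every complex root of the cubic polynomial 2X³ + (K + 2ωc)X² + ωc·K·X + ωc·ã·R·Ki2 has negative real part if and only if ã < K(K + 2ωc)/(2·R·Ki2). -/
lemma cubic_hurwitz (a b c d : ℝ) (ha : 0 < a) (hb : 0 < b) (hc : 0 < c) (hd : 0 < d) :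
    (∀ z : ℂ, (a:ℂ)*z^3 + (b:ℂ)*z^2 + (c:ℂ)*z + (d:ℂ) = 0 → z.re < 0) ↔ a*d < b*c := by
  constructor
  · intro h
    by_contra hle
    push_neg at hle  -- hle : b*c ≤ a*d
    set q : ℝ → ℝ := fun x => 8*a^2*x^3 + 8*a*b*x^2 + 2*(a*c+b^2)*x - (a*d - b*c) with hq
    have hcont : Continuous q := by fun_prop
    have h0 : q 0 ≤ 0 := by simp [hq]; linarith
    set M : ℝ := (a*d - b*c)/(2*(a*c+b^2)) + 1 with hM
    have hnum : 0 ≤ a*d - b*c := by linarith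
    have hden : 0 < 2*(a*c+b^2) := by positivity
    have hMpos : 0 ≤ M := by
      rw [hM]
      have : 0 ≤ (a*d - b*c)/(2*(a*c+b^2)) := div_nonneg hnum hden.le
      linarith
    have hqM : 0 ≤ q M := by
      have h1 : 2*(a*c+b^2)*M = (a*d - b*c) + 2*(a*c+b^2) := by
        rw [hM]; field_simp
      have h2 : 0 ≤ 8*a^2*M^3 + 8*a*b*M^2 := by positivity
      simp only [hq]
      linarith
    obtain ⟨x, hx, hqx⟩ := intermediate_value_Icc hMpos hcont.continuousOn
      (Set.mem_Icc.mpr ⟨h0, hqM⟩)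
    obtain ⟨hx0, -⟩ := Set.mem_Icc.mp hx
    simp only [hq] at hqx
    set S : ℝ := (3*a*x^2 + 2*b*x + c)/a with hS
    have hSpos : 0 < S := by
      apply div_pos _ ha
      nlinarith [mul_nonneg ha.le (sq_nonneg x), mul_nonneg hb.le hx0]
    set y : ℝ := Real.sqrt S with hy
    have hy2 : a*y^2 = 3*a*x^2 + 2*b*x + c := by
      rw [hy, Real.sq_sqrt hSpos.le, hS]
      field_simp
    set z : ℂ := ⟨x, y⟩ with hz
    have hroot : (a:ℂ)*z^3 + (b:ℂ)*z^2 + (c:ℂ)*z + (d:ℂ) = 0 := by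
      rw [Complex.ext_iff]
      constructor
      · simp only [hz, Complex.add_re, Complex.mul_re, Complex.mul_im, pow_succ, pow_zero,
          one_mul, Complex.ofReal_re, Complex.ofReal_im, Complex.zero_re]
        ring_nf
        have goal : a * (a * ((x*x - y*y)*x - (x*y + y*x)*y) + b*(x*x - y*y) + c*x + d) = 0 := by
          linear_combination (-1:ℝ)*hqx - (3*a*x+b)*hy2
        nlinarith [goal, ha, sq_nonneg a]
      · simp only [hz, Complex.add_im, Complex.mul_re, Complex.mul_im, pow_succ, pow_zero,
          one_mul, Complex.ofReal_re, Complex.ofReal_im, Complex.zero_im]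
        linear_combination (-y)*hy2
    have := h z hroot
    have : x < 0 := this
    linarith
  · intro hcond z hz
    obtain ⟨x, y⟩ := z
    by_contra hxe
    push_neg at hxe
    simp only [Complex.ofReal_re] at hxe ⊢
    rw [Complex.ext_iff] at hz
    obtain ⟨h1, h2⟩ := hz
    simp only [Complex.add_re, Complex.add_im, Complex.mul_re, Complex.mul_im, pow_succ,
      pow_zero, one_mul, Complex.ofReal_re, Complex.ofReal_im, Complex.zero_re,
      Complex.zero_im] at h1 h2
    have h2' : y*(3*a*x^2 + 2*b*x + c - a*y^2) = 0 := by linear_combination h2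
    rcases mul_eq_zero.mp h2' with hy0 | hyy
    · subst hy0
      nlinarith [h1, mul_nonneg ha.le (mul_nonneg (mul_nonneg hxe hxe) hxe),
        mul_nonneg hb.le (mul_nonneg hxe hxe), mul_nonneg hc.le hxe]
    · have hy2 : a*y^2 = 3*a*x^2 + 2*b*x + c := by linarith
      have key : 8*a^2*x^3 + 8*a*b*x^2 + 2*(a*c+b^2)*x = a*d - b*c := by
        linear_combination (-a)*h1 - (3*a*x+b)*hy2
      have t1 : 0 ≤ 8*a^2*x^3 := mul_nonneg (by positivity) (pow_nonneg hxe 3)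
      have t2 : 0 ≤ 8*a*b*x^2 := by positivity
      have t3 : 0 ≤ 2*(a*c+b^2)*x := mul_nonneg (by positivity) hxe
      linarith



/-- Stability condition for the first cubic factor
`2X³ + (K + 2ωc)X² + ωc·K·X + ωc·ã·R·Ki2` of the characteristic polynomial of the
linearized controlled slow flow: all complex roots have negative real part iff
`ã < K(K + 2ωc)/(2·R·Ki2)`. -/
theorem first_cubic_stability (K ωc R Ki2 atil : ℝ)
    (hK : 0 < K) (hωc : 0 < ωc) (hR : 0 < R) (hKi2 : 0 < Ki2) (ha : 0 < atil) :
    (∀ z : ℂ, (2 : ℂ) * z ^ 3 + ((K : ℂ) + 2 * (ωc : ℂ)) * z ^ 2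
        + (ωc : ℂ) * (K : ℂ) * z + (ωc : ℂ) * (atil : ℂ) * (R : ℂ) * (Ki2 : ℂ) = 0 →
      z.re < 0) ↔
      atil < K * (K + 2 * ωc) / (2 * R * Ki2) := by

  have h := cubic_hurwitz 2 (K + 2*ωc) (ωc*K) (ωc*atil*R*Ki2)
    (by norm_num) (by linarith) (by positivity) (by positivity)
  have heq : (∀ z : ℂ, (2 : ℂ) * z ^ 3 + ((K : ℂ) + 2 * (ωc : ℂ)) * z ^ 2
        + (ωc : ℂ) * (K : ℂ) * z + (ωc : ℂ) * (atil : ℂ) * (R : ℂ) * (Ki2 : ℂ) = 0 →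
      z.re < 0) ↔
      (∀ z : ℂ, ((2:ℝ):ℂ)*z^3 + ((K + 2*ωc : ℝ):ℂ)*z^2 + ((ωc*K : ℝ):ℂ)*z
        + ((ωc*atil*R*Ki2 : ℝ):ℂ) = 0 → z.re < 0) := by
    constructor <;> intro hh z hz <;> apply hh z <;> · push_cast at hz ⊢; linear_combination hz
  rw [heq, h]
  rw [lt_div_iff₀ (by positivity)]
  constructor <;> intro hh <;> nlinarith [hh, hωc]
end

section
/- Let K, ωc, R, Ki2, Ki3, ε, μ̃, μ0, d, F1a, F1μ, F2a, F2, F2μ be real numbers and ã a nonzero real number. Let M be the 6×6 real matrix with rows (indexed by the slow-flow variables (a, α, y1, y2, y3, η)): row 1 = (−K/2 + ε·F1a, 0, 0, 0, 0, (K/2)(μ̃−μ0) + ε·F1μ·d); row 2 = ((ε/ã²)(ã·F2a − F2), −K/2, 0, 0, −Ki2, −(ε/ã)·F2μ·d); row 3 = (0, ã·ωc/2, −ωc, 0, 0, 0); row 4 = (ωc/2, 0, 0, −ωc, 0, 0); row 5 = (0, 0, R, 0, 0, 0); row 6 = (0, 0, 0, 2·Ki3, 0, −Ki3(μ̃−μ0)).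 Then 4 times the characteristic polynomial of M equals the product q1·q2 of the two cubic polynomials q1 = 2X³ + (K + 2ωc)X² + ωc·K·X + ωc·ã·R·Ki2 and q2 = 2X³ + (2ωc + K + 2Ki3(μ̃−μ0) − 2ε·F1a)X² + (ωc(K − 2ε·F1a) + Ki3(μ̃−μ0)(2ωc + K − 2ε·F1a))X − 2·Ki3·ε·ωc·((μ̃−μ0)·F1a + d·F1μ). -/
open Polynomial

private lemma cv0 {α : Type*} (a0 a1 a2 a3 a4 a5 : α) : ![a0,a1,a2,a3,a4,a5] 0 = a0 := rfl
private lemma cv1 {α : Type*} (a0 a1 a2 a3 a4 a5 : α) : ![a0,a1,a2,a3,a4,a5] 1 = a1 := rfl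
private lemma cv2 {α : Type*} (a0 a1 a2 a3 a4 a5 : α) : ![a0,a1,a2,a3,a4,a5] 2 = a2 := rfl
private lemma cv3 {α : Type*} (a0 a1 a2 a3 a4 a5 : α) : ![a0,a1,a2,a3,a4,a5] 3 = a3 := rfl
private lemma cv4 {α : Type*} (a0 a1 a2 a3 a4 a5 : α) : ![a0,a1,a2,a3,a4,a5] 4 = a4 := rfl
private lemma cv5 {α : Type*} (a0 a1 a2 a3 a4 a5 : α) : ![a0,a1,a2,a3,a4,a5] 5 = a5 := rfl
private lemma cw0 {α : Type*} (a0 a1 a2 : α) : ![a0,a1,a2] 0 = a0 := rfl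
private lemma cw1 {α : Type*} (a0 a1 a2 : α) : ![a0,a1,a2] 1 = a1 := rfl
private lemma cw2 {α : Type*} (a0 a1 a2 : α) : ![a0,a1,a2] 2 = a2 := rfl

private lemma cv0' {α : Type*} (a0 a1 a2 a3 a4 a5 : α) : ![a0,a1,a2,a3,a4,a5] ⟨0, by omega⟩ = a0 := rfl
private lemma cv1' {α : Type*} (a0 a1 a2 a3 a4 a5 : α) : ![a0,a1,a2,a3,a4,a5] ⟨1, by omega⟩ = a1 := rfl
private lemma cv2' {α : Type*} (a0 a1 a2 a3 a4 a5 : α) : ![a0,a1,a2,a3,a4,a5] ⟨2, by omega⟩ = a2 := rfl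
private lemma cv3' {α : Type*} (a0 a1 a2 a3 a4 a5 : α) : ![a0,a1,a2,a3,a4,a5] ⟨3, by omega⟩ = a3 := rfl
private lemma cv4' {α : Type*} (a0 a1 a2 a3 a4 a5 : α) : ![a0,a1,a2,a3,a4,a5] ⟨4, by omega⟩ = a4 := rfl
private lemma cv5' {α : Type*} (a0 a1 a2 a3 a4 a5 : α) : ![a0,a1,a2,a3,a4,a5] ⟨5, by omega⟩ = a5 := rfl
private lemma cw0' {α : Type*} (a0 a1 a2 : α) : ![a0,a1,a2] ⟨0, by omega⟩ = a0 := rfl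
private lemma cw1' {α : Type*} (a0 a1 a2 : α) : ![a0,a1,a2] ⟨1, by omega⟩ = a1 := rfl
private lemma cw2' {α : Type*} (a0 a1 a2 : α) : ![a0,a1,a2] ⟨2, by omega⟩ = a2 := rfl

private def blockEquiv : Fin 3 ⊕ Fin 3 ≃ Fin 6 where
  toFun := Sum.elim ![0, 3, 5] ![1, 2, 4]
  invFun := ![Sum.inl 0, Sum.inr 0, Sum.inr 1, Sum.inl 1, Sum.inr 2, Sum.inl 2]
  left_inv := by decide
  right_inv := by decide


set_option maxHeartbeats 1000000 in
/-- The characteristic polynomial of the Jacobian of the controlled slow-flow system,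
multiplied by 4, factorizes into the product of two cubics. -/
theorem charpoly_factorization (K ωc R Ki2 Ki3 ε μt μ0 d F1a F1μ F2a F2 F2μ : ℝ)
    (atil : ℝ) (ha : atil ≠ 0) :
    (4 : ℝ[X]) * (Matrix.charpoly
      (!![-K/2 + ε*F1a, 0, 0, 0, 0, (K/2)*(μt - μ0) + ε*F1μ*d;
          (ε/atil^2)*(atil*F2a - F2), -K/2, 0, 0, -Ki2, -(ε/atil)*F2μ*d;
          0, atil*ωc/2, -ωc, 0, 0, 0;
          ωc/2, 0, 0, -ωc, 0, 0;
          0, 0, R, 0, 0, 0;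
          0, 0, 0, 2*Ki3, 0, -Ki3*(μt - μ0)] : Matrix (Fin 6) (Fin 6) ℝ)) =
    (C 2 * X^3 + C (K + 2*ωc) * X^2 + C (ωc*K) * X + C (ωc*atil*R*Ki2)) *
    (C 2 * X^3 + C (2*ωc + K + 2*Ki3*(μt - μ0) - 2*ε*F1a) * X^2
      + C (ωc*(K - 2*ε*F1a) + Ki3*(μt - μ0)*(2*ωc + K - 2*ε*F1a)) * X
      - C (2*Ki3*ε*ωc*((μt - μ0)*F1a + d*F1μ))) := by
  generalize (ε / atil ^ 2 * (atil * F2a - F2) : ℝ) = b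
  generalize (-(ε / atil) * F2μ * d : ℝ) = c
  apply Polynomial.funext
  intro x
  rw [Matrix.charpoly]
  simp only [eval_mul]
  rw [← coe_evalRingHom, RingHom.map_det]
  simp only [RingHom.mapMatrix_apply, coe_evalRingHom]
  rw [← Matrix.det_submatrix_equiv_self blockEquiv]
  have hblk : Matrix.submatrix ((Matrix.charmatrix
      (!![-K/2 + ε*F1a, 0, 0, 0, 0, (K/2)*(μt - μ0) + ε*F1μ*d;
          b, -K/2, 0, 0, -Ki2, c;
          0, atil*ωc/2, -ωc, 0, 0, 0;
          ωc/2, 0, 0, -ωc, 0, 0;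
          0, 0, R, 0, 0, 0;
          0, 0, 0, 2*Ki3, 0, -Ki3*(μt - μ0)] : Matrix (Fin 6) (Fin 6) ℝ)).map (eval x))
        blockEquiv blockEquiv =
      Matrix.fromBlocks
        !![x - (-K/2 + ε*F1a), 0, -((K/2)*(μt - μ0) + ε*F1μ*d);
           -(ωc/2), x + ωc, 0;
           0, -(2*Ki3), x + Ki3*(μt - μ0)]
        0
        !![-b, 0, -c; 0, 0, 0; 0, 0, 0]
        !![x + K/2, 0, Ki2; -(atil*ωc/2), x + ωc, 0; 0, -R, x] := by
    ext i j
    rcases i with i | i <;> rcases j with j | j <;>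
      fin_cases i <;> fin_cases j <;>
      simp [blockEquiv, Matrix.submatrix_apply, Matrix.charmatrix_apply,
        Matrix.diagonal_apply, Matrix.map_apply, Matrix.fromBlocks,
        cv0, cv1, cv2, cv3, cv4, cv5, cw0, cw1, cw2, cv0', cv1', cv2', cv3', cv4', cv5', cw0', cw1', cw2', sub_eq_add_neg, -Matrix.vecCons_const, -Matrix.cons_val', Matrix.of_apply] <;>
      ring
  rw [hblk, Matrix.det_fromBlocks_zero₁₂, Matrix.det_fin_three, Matrix.det_fin_three]
  simp only [eval_add, eval_sub, eval_mul, eval_pow, eval_C, eval_X, eval_ofNat,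
    cw0, cw1, cw2, Matrix.of_apply, Matrix.cons_val_zero, Matrix.cons_val_one,
    Matrix.head_cons]
  ring
end

section
/- Let ε, Kd1, ωc, R, Ki2, Ki3, ω0, G0, Δ, F1, F2 be real numbers with ε ≠ 0, Kd1 ≠ 0, ωc > 0, R ≠ 0, Ki2 ≠ 0, Ki3 ≠ 0, and let ã > 0, α̃, ỹ1, ỹ2, ỹ3, η̃ be real numbers such that G := G0 + Δ·sin η̃ > 0. Suppose the fixed-point equations hold: (i) 0 = ε·F1 + (Kd1/2)(G·cos α̃ − ã); (ii) 0 = −(ε/ã)·F2 + 1 − ω0 − Ki2·ỹ3 − (Kd1/(2ã))·G·sin α̃; (iii) 0 = ωc((ã/2)·sin α̃ − ỹ1); (iv) 0 = ωc((ã/2)·cos α̃ − ỹ2); (v) 0 = R·ỹ1; (vi) 0 = Ki3(2·ỹ2 − G). Then sin α̃ = 0, cos α̃ = 1, ỹ1 = 0, ỹ2 = ã/2, G = ã, F1 = 0, Ki2·ỹ3 = 1 − ω0 − (ε/ã)·F2, and (Δ·cos η̃)² + (ã − G0)² = Δ². -/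
/-- Non-invasiveness: any fixed point of the averaged controlled system corresponds to a
limit cycle of the uncontrolled system (`f1 = 0`), in phase (`α̃ = 0`) with matching
amplitude `G = ã`, lying on the continuation circle of radius `Δ`. -/
theorem fixed_points_controlled_system
    (ε Kd1 ωc R Ki2 Ki3 ω0 G0 Δ F1 F2 : ℝ)
    (hε : ε ≠ 0) (hKd1 : Kd1 ≠ 0) (hωc : 0 < ωc) (hR : R ≠ 0)
    (hKi2 : Ki2 ≠ 0) (hKi3 : Ki3 ≠ 0)
    (atil αt y1 y2 y3 ηt : ℝ) (ha : 0 < atil)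
    (hG : 0 < G0 + Δ * Real.sin ηt)
    (h1 : 0 = ε * F1 + (Kd1 / 2) * ((G0 + Δ * Real.sin ηt) * Real.cos αt - atil))
    (h2 : 0 = -(ε / atil) * F2 + 1 - ω0 - Ki2 * y3
        - (Kd1 / (2 * atil)) * (G0 + Δ * Real.sin ηt) * Real.sin αt)
    (h3 : 0 = ωc * ((atil / 2) * Real.sin αt - y1))
    (h4 : 0 = ωc * ((atil / 2) * Real.cos αt - y2))
    (h5 : 0 = R * y1)
    (h6 : 0 = Ki3 * (2 * y2 - (G0 + Δ * Real.sin ηt))) :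
    Real.sin αt = 0 ∧ Real.cos αt = 1 ∧ y1 = 0 ∧ y2 = atil / 2 ∧
      G0 + Δ * Real.sin ηt = atil ∧ F1 = 0 ∧
      Ki2 * y3 = 1 - ω0 - (ε / atil) * F2 ∧
      (Δ * Real.cos ηt) ^ 2 + (atil - G0) ^ 2 = Δ ^ 2 := by
  have hy1 : y1 = 0 := by
    rcases mul_eq_zero.mp h5.symm with h | h
    · exact absurd h hR
    · exact h
  have hsin : Real.sin αt = 0 := by
    rcases mul_eq_zero.mp h3.symm with h | h
    · exact absurd h hωc.ne'
    · have := sub_eq_zero.mp h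
      rw [hy1] at this
      rcases mul_eq_zero.mp this with h' | h'
      · exact absurd h' (by positivity)
      · exact h'
  have hy2 : y2 = (atil / 2) * Real.cos αt := by
    rcases mul_eq_zero.mp h4.symm with h | h
    · exact absurd h hωc.ne'
    · linarith [sub_eq_zero.mp h]
  have hGy : 2 * y2 = G0 + Δ * Real.sin ηt := by
    rcases mul_eq_zero.mp h6.symm with h | h
    · exact absurd h hKi3
    · linarith [sub_eq_zero.mp h]
  have hacos : atil * Real.cos αt = G0 + Δ * Real.sin ηt := by
    rw [hy2] at hGy; linarith
  have hcossq : Real.cos αt ^ 2 = 1 := by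
    have := Real.sin_sq_add_cos_sq αt
    rw [hsin] at this; linarith
  have hcos : Real.cos αt = 1 := by
    have h' : (Real.cos αt - 1) * (Real.cos αt + 1) = 0 := by nlinarith
    rcases mul_eq_zero.mp h' with h | h
    · linarith
    · have hc : Real.cos αt = -1 := by linarith
      rw [hc] at hacos; nlinarith
  have hGa : G0 + Δ * Real.sin ηt = atil := by
    rw [hcos] at hacos; linarith
  have hF1 : F1 = 0 := by
    rw [hcos, hGa] at h1
    have : ε * F1 = 0 := by linarith
    rcases mul_eq_zero.mp this with h | h
    · exact absurd h hε
    · exact h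
  refine ⟨hsin, hcos, hy1, by rw [hy2, hcos]; ring, hGa, hF1, ?_, ?_⟩
  · rw [hsin] at h2; linarith
  · have hsinη : Δ * Real.sin ηt = atil - G0 := by linarith
    have hpy := Real.sin_sq_add_cos_sq ηt
    linear_combination Δ ^ 2 * hpy - (Δ * Real.sin ηt + (atil - G0)) * hsinη
end

section
/- Let K, ωc, Ki3, ε, F1a, F1μ, η̃ be real numbers with ωc > 0, K > 2ε·F1a, and ε·Ki3·(cos η̃·F1a − sin η̃·F1μ) < 0. Define for real Δ the polynomial p(X, Δ) = 2X³ + (2ωc + K + 2·Ki3·Δ·cos η̃ − 2ε·F1a)X² + (ωc(K − 2ε·F1a) + Ki3·Δ·cos η̃·(2ωc + K − 2ε·F1a))X − 2·Ki3·ε·ωc·Δ·(cos η̃·F1a − sin η̃·F1μ). Then there exists Δ0 > 0 such that for all Δ with 0 < Δ < Δ0, every complex root of p(·, Δ) has negative real part. -/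
lemma cubic_hurwitz_s6 (A B C : ℝ) (hA : 0 < A) (hB : 0 < B) (hC : 0 < C)
    (hABC : C < A * B) (z : ℂ)
    (hz : z ^ 3 + (A : ℂ) * z ^ 2 + (B : ℂ) * z + (C : ℂ) = 0) : z.re < 0 := by
  by_contra hx
  push_neg at hx
  set x := z.re with hxdef
  set y := z.im with hydef
  have h1 : x ^ 3 - 3 * x * y ^ 2 + A * (x ^ 2 - y ^ 2) + B * x + C = 0 := by
    have := congrArg Complex.re hz
    simp [pow_succ, Complex.mul_re, Complex.mul_im, Complex.add_re, Complex.add_im,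
      Complex.ofReal_re, Complex.ofReal_im] at this
    linarith [this]
  have h2 : y * (3 * x ^ 2 - y ^ 2 + 2 * A * x + B) = 0 := by
    have := congrArg Complex.im hz
    simp [pow_succ, Complex.mul_re, Complex.mul_im, Complex.add_re, Complex.add_im,
      Complex.ofReal_re, Complex.ofReal_im] at this
    nlinarith [this]
  rcases mul_eq_zero.mp h2 with hy | hq
  · rw [hy] at h1
    nlinarith [pow_nonneg hx 3, mul_nonneg (mul_nonneg hA.le hx) hx, mul_nonneg hB.le hx]
  · have key : 8 * x ^ 3 + 8 * A * x ^ 2 + 2 * B * x + 2 * A ^ 2 * x + (A * B - C) = 0 := by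
      linear_combination -h1 + 3 * x * hq + A * hq
    nlinarith [pow_nonneg hx 3, mul_nonneg (mul_nonneg hA.le hx) hx, mul_nonneg hB.le hx,
      mul_nonneg (mul_nonneg hA.le hA.le) hx]

set_option maxHeartbeats 1000000 in
/-- For small enough positive continuation radius `Δ`, all complex roots of the second
characteristic cubic have negative real part, under the stability sign conditions. -/
theorem second_cubic_stability_small_radius (K ωc Ki3 ε F1a F1μ ηt : ℝ)
    (hωc : 0 < ωc) (hK : 2 * ε * F1a < K)
    (hsign : ε * Ki3 * (Real.cos ηt * F1a - Real.sin ηt * F1μ) < 0) :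
    ∃ Δ0 > (0 : ℝ), ∀ Δ : ℝ, 0 < Δ → Δ < Δ0 →
      ∀ z : ℂ, (2 : ℂ) * z ^ 3
          + ((2*ωc + K + 2*Ki3*Δ*Real.cos ηt - 2*ε*F1a : ℝ) : ℂ) * z ^ 2
          + ((ωc*(K - 2*ε*F1a) + Ki3*Δ*Real.cos ηt*(2*ωc + K - 2*ε*F1a) : ℝ) : ℂ) * z
          - ((2*Ki3*ε*ωc*Δ*(Real.cos ηt * F1a - Real.sin ηt * F1μ) : ℝ) : ℂ) = 0 →
        z.re < 0 := by
  obtain ⟨m, hmdef⟩ : ∃ m : ℝ, m = K - 2 * ε * F1a := ⟨_, rfl⟩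
  have hm0 : 0 < m := by rw [hmdef]; linarith
  obtain ⟨L, hLdef⟩ : ∃ L : ℝ, L = Ki3 * Real.cos ηt := ⟨_, rfl⟩
  obtain ⟨M, hMdef⟩ : ∃ M : ℝ, M = -(ε * Ki3 * (Real.cos ηt * F1a - Real.sin ηt * F1μ)) := ⟨_, rfl⟩
  have hM0 : 0 < M := by rw [hMdef]; linarith
  obtain ⟨S, hSdef⟩ : ∃ S : ℝ, S = 2 * ωc + m := ⟨_, rfl⟩
  have hS0 : 0 < S := by rw [hSdef]; linarith
  refine ⟨min (ωc * m / (2 * (|L| * S + 1))) (S * m / (64 * (M + 1))), ?_, ?_⟩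
  · have hd1 : 0 < ωc * m / (2 * (|L| * S + 1)) := by positivity
    have hd2 : 0 < S * m / (64 * (M + 1)) := by positivity
    exact lt_min hd1 hd2
  intro Δ hΔ0 hΔlt z heq
  have h1 : Δ < ωc * m / (2 * (|L| * S + 1)) := lt_of_lt_of_le hΔlt (min_le_left _ _)
  have h2 : Δ < S * m / (64 * (M + 1)) := lt_of_lt_of_le hΔlt (min_le_right _ _)
  rw [lt_div_iff₀ (by positivity)] at h1
  rw [lt_div_iff₀ (by positivity)] at h2
  -- basic bounds
  have hLl : -(|L| * Δ) ≤ L * Δ := by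
    have := mul_le_mul_of_nonneg_right (neg_abs_le L) hΔ0.le
    linarith
  have hLlS : -(|L| * Δ * S) ≤ L * Δ * S := by
    have := mul_le_mul_of_nonneg_right hLl hS0.le
    linarith [this]
  have hLS : |L| * Δ * S < ωc * m / 2 := by nlinarith [abs_nonneg L]
  have hSsq : 8 * ωc * m ≤ S ^ 2 := by
    rw [hSdef]; nlinarith [sq_nonneg (2 * ωc - m)]
  have hLΔ : |L| * Δ < S / 16 := by
    have h16 : |L| * Δ * S < S ^ 2 / 16 := by linarith
    nlinarith [h16]
  have hm' : 0 < ωc * m := mul_pos hωc hm0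
  have hA : 0 < (S + 2 * L * Δ) / 2 := by linarith
  have hB : 0 < (ωc * m + L * Δ * S) / 2 := by linarith
  have hC : 0 < ωc * Δ * M := by positivity
  have hΔM : Δ * M < S * m / 64 := by nlinarith [hΔ0, hM0]
  have hABC : ωc * Δ * M < ((S + 2 * L * Δ) / 2) * ((ωc * m + L * Δ * S) / 2) := by
    have ha : 7 * S / 8 < S + 2 * L * Δ := by linarith
    have hb : ωc * m / 2 < ωc * m + L * Δ * S := by linarith
    nlinarith [mul_lt_mul'' ha hb (by positivity) (by positivity),
      mul_lt_mul_of_pos_left hΔM hωc, mul_pos (mul_pos hS0 hωc) hm0]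
  have heq' : z ^ 3 + (((S + 2 * L * Δ) / 2 : ℝ) : ℂ) * z ^ 2
      + (((ωc * m + L * Δ * S) / 2 : ℝ) : ℂ) * z + ((ωc * Δ * M : ℝ) : ℂ) = 0 := by
    have heqc := heq
    push_cast at heqc
    rw [hSdef, hLdef, hMdef, hmdef]
    push_cast
    linear_combination heqc / 2
  exact cubic_hurwitz_s6 _ _ _ hA hB hC hABC z heq'
end
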